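/- arXiv:1805.01153 — 5 statements merged into one kernel-verified Lean document; each statement's English description precedes it below -/
import Mathlib

section
/- Let M be a weight sequence with quotients m_p = M_{p+1}/M_p. Define ω(M) = liminf_{p→∞} log(m_p)/log(p). Then ω(M) = sup{μ>0 : Σ_{p=0}^∞ (1/m_p)^{1/μ} < ∞} (with the convention sup ∅ = 0). -/
open Filter Real Topology

private lemma pringsheim {a : ℕ → ℝ} (hpos : ∀ n, 0 < a n)
    (hanti : Antitone a) (hsum : Summable a) :
    ∀ᶠ n : ℕ in atTop, a n ≤ 1 / n := by
  have htail : Tendsto (fun i => ∑' k, a (k + i)) atTop (𝓝 0) := tendsto_sum_nat_add a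
  obtain ⟨N, hN⟩ : ∃ N : ℕ, ∑' k, a (k + N) ≤ 1/2 :=
    (htail.eventually (eventually_le_nhds (by norm_num : (0:ℝ) < 1/2))).exists
  refine eventually_atTop.2 ⟨2*N + 2, fun n hn => ?_⟩
  have hsumN : Summable fun k => a (k + N) := (summable_nat_add_iff N).2 hsum
  have hfin : ∑ k ∈ Finset.range (n - N), a (k + N) ≤ 1/2 :=
    le_trans (Summable.sum_le_tsum _ (fun k _ => (hpos _).le) hsumN) hN
  have hNn : N ≤ n := by omega
  have hcard : ((n - N : ℕ) : ℝ) * a n ≤ ∑ k ∈ Finset.range (n - N), a (k + N) := by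
    have := Finset.card_nsmul_le_sum (Finset.range (n - N)) (fun k => a (k + N)) (a n)
      (fun k hk => hanti (by have := Finset.mem_range.1 hk; omega))
    simpa [nsmul_eq_mul] using this
  have hhalf : (n : ℝ) ≤ 2 * ((n - N : ℕ) : ℝ) := by
    rw [Nat.cast_sub hNn]
    have h2 := (Nat.cast_le (α := ℝ)).2 hn
    push_cast at h2
    linarith
  have hn2 : (0:ℝ) < (n:ℝ) := by
    have : 0 < n := by omega
    exact_mod_cast this
  rw [le_div_iff₀ hn2, mul_comm]
  nlinarith [mul_le_mul_of_nonneg_right hhalf (hpos n).le]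

/-- For a weight sequence, `ω(M) = liminf log(m p)/log p` equals the supremum of
the exponents `μ > 0` for which `∑ (1/m p)^(1/μ)` converges (with `sup ∅ = 0`). -/
theorem omega_eq_sup_summable_exponents (M : ℕ → ℝ)
    (hpos : ∀ p, 0 < M p) (hM0 : M 0 = 1)
    (hlc : ∀ p : ℕ, 1 ≤ p → (M p) ^ 2 ≤ M (p - 1) * M (p + 1))
    (htend : Tendsto (fun p => M (p + 1) / M p) atTop atTop) :
    liminf (fun p : ℕ =>
        ((Real.log (M (p + 1) / M p) / Real.log p : ℝ) : EReal)) atTop =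
      sSup (insert (0 : EReal) ((fun μ : ℝ => (μ : EReal)) ''
        {μ : ℝ | 0 < μ ∧
          Summable fun p : ℕ => (1 / (M (p + 1) / M p)) ^ ((1 : ℝ) / μ)})) := by
  set m : ℕ → ℝ := fun p => M (p + 1) / M p with hm
  have hmpos : ∀ p, 0 < m p := fun p => div_pos (hpos _) (hpos _)
  have hmono : Monotone m := by
    apply monotone_nat_of_le_succ
    intro p
    have h := hlc (p + 1) (by omega)
    simp only [Nat.add_sub_cancel] at h
    have : M (p+1) * M (p+1) ≤ M (p+2) * M p := by nlinarith [sq_nonneg (M (p+1))]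
    rw [hm]
    rw [div_le_div_iff₀ (hpos p) (hpos (p+1))]
    linarith
  have hlogn : ∀ p : ℕ, 0 ≤ Real.log p := by
    intro p
    rcases Nat.eq_zero_or_pos p with h | h
    · simp [h]
    · exact Real.log_nonneg (by exact_mod_cast h)
  set S := insert (0 : EReal) ((fun μ : ℝ => (μ : EReal)) ''
      {μ : ℝ | 0 < μ ∧ Summable fun p : ℕ => (1 / (M (p + 1) / M p)) ^ ((1 : ℝ) / μ)}) with hS
  apply le_antisymm
  · -- liminf ≤ sSup
    refine le_of_forall_lt fun c hc => ?_
    have h0le : (0 : EReal) ≤ sSup S := le_sSup (Set.mem_insert _ _)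
    obtain ⟨y, hcy, hyL⟩ := exists_between hc
    rcases le_or_gt y 0 with hy0 | hy0
    · exact lt_of_lt_of_le hcy (le_trans hy0 h0le)
    obtain ⟨z, hyz, hzL⟩ := exists_between hyL
    have hytop : y ≠ ⊤ := (hyz.trans_le le_top).ne
    have hybot : y ≠ ⊥ := ne_bot_of_gt hy0
    have hztop : z ≠ ⊤ := (hzL.trans_le le_top).ne
    have hzbot : z ≠ ⊥ := (hy0.trans hyz).ne_bot
    set μ := y.toReal with hμdef
    set ν := z.toReal with hνdef
    have hyμ : y = (μ : EReal) := (EReal.coe_toReal hytop hybot).symm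
    have hzν : z = (ν : EReal) := (EReal.coe_toReal hztop hzbot).symm
    rw [hyμ] at hy0 hyz hcy
    rw [hzν] at hyz hzL
    have hμpos : (0:ℝ) < μ := by exact_mod_cast hy0
    have hμν : μ < ν := by exact_mod_cast hyz
    have hev := eventually_lt_of_lt_liminf hzL
    have hbound : ∀ᶠ p : ℕ in atTop,
        (1 / m p) ^ ((1:ℝ)/μ) ≤ (p : ℝ) ^ (-(ν/μ)) := by
      filter_upwards [hev, eventually_ge_atTop 2] with p hp hp2
      have hp1 : (1:ℝ) < p := by exact_mod_cast hp2
      have hlogp : 0 < Real.log p := Real.log_pos hp1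
      have hp0 : (0:ℝ) < p := by linarith
      have hνf : ν < Real.log (m p) / Real.log p := by exact_mod_cast hp
      have h1 : ν * Real.log p < Real.log (m p) :=
        (lt_div_iff₀ hlogp).1 hνf
      have h2 : Real.log ((p:ℝ) ^ ν) < Real.log (m p) := by
        rwa [Real.log_rpow hp0]
      have h3 : (p:ℝ) ^ ν ≤ m p :=
        ((Real.log_lt_log_iff (Real.rpow_pos_of_pos hp0 ν) (hmpos p)).1 h2).le
      have h4 : 1 / m p ≤ (p:ℝ) ^ (-ν) := by
        rw [Real.rpow_neg hp0.le, ← one_div]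
        exact one_div_le_one_div_of_le (Real.rpow_pos_of_pos hp0 ν) h3
      calc (1 / m p) ^ ((1:ℝ)/μ)
          ≤ ((p:ℝ) ^ (-ν)) ^ ((1:ℝ)/μ) :=
            Real.rpow_le_rpow (one_div_pos.2 (hmpos p)).le h4 (one_div_pos.2 hμpos).le
        _ = (p : ℝ) ^ (-(ν/μ)) := by
            rw [← Real.rpow_mul hp0.le]
            ring_nf
    obtain ⟨N, hN⟩ := eventually_atTop.1 hbound
    have hexp : -(ν/μ) < -1 := by
      have : 1 < ν/μ := (one_lt_div hμpos).2 hμν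
      linarith
    have hsum : Summable fun p : ℕ => (1 / m p) ^ ((1:ℝ)/μ) := by
      rw [← summable_nat_add_iff N]
      refine Summable.of_nonneg_of_le
        (fun n => (Real.rpow_pos_of_pos (one_div_pos.2 (hmpos _)) _).le)
        (fun n => hN (n + N) (by omega)) ?_
      exact (summable_nat_add_iff N).2 (Real.summable_nat_rpow.2 hexp)
    have hmem : (μ : EReal) ∈ S :=
      Set.mem_insert_of_mem _ ⟨μ, ⟨hμpos, hsum⟩, rfl⟩
    exact lt_of_lt_of_le hcy (le_sSup hmem)
  · -- sSup ≤ liminf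
    refine sSup_le fun x hx => ?_
    rcases hx with rfl | ⟨μ, ⟨hμpos, hμsum⟩, rfl⟩
    · refine le_liminf_of_le (by isBoundedDefault) ?_
      filter_upwards [htend.eventually_ge_atTop 1] with p hp
      have : (0:ℝ) ≤ Real.log (m p) / Real.log p :=
        div_nonneg (Real.log_nonneg hp) (hlogn p)
      exact_mod_cast this
    · set a : ℕ → ℝ := fun p => (1 / m p) ^ ((1:ℝ)/μ) with ha
      have hapos : ∀ p, 0 < a p :=
        fun p => Real.rpow_pos_of_pos (one_div_pos.2 (hmpos p)) _
      have hanti : Antitone a := by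
        intro p q hpq
        exact Real.rpow_le_rpow (one_div_pos.2 (hmpos q)).le
          (one_div_le_one_div_of_le (hmpos p) (hmono hpq)) (by positivity)
      have hev := pringsheim hapos hanti hμsum
      refine le_liminf_of_le (by isBoundedDefault) ?_
      filter_upwards [hev, eventually_ge_atTop 2] with p hp hp2
      have hp1 : (1:ℝ) < p := by exact_mod_cast hp2
      have hlogp : 0 < Real.log p := Real.log_pos hp1
      have hp0 : (0:ℝ) < p := by linarith
      -- from a p ≤ 1/p deduce μ * log p ≤ log (m p)
      have h1 : Real.log (a p) ≤ Real.log (1 / (p:ℝ)) :=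
        Real.log_le_log (hapos p) hp
      have h2 : ((1:ℝ)/μ) * Real.log (1 / m p) ≤ - Real.log p := by
        rwa [ha, Real.log_rpow (one_div_pos.2 (hmpos p)), Real.log_div one_ne_zero hp0.ne',
          Real.log_one, zero_sub] at h1
      have h3 : ((1:ℝ)/μ) * (- Real.log (m p)) ≤ - Real.log p := by
        rwa [Real.log_div one_ne_zero (hmpos p).ne', Real.log_one, zero_sub] at h2
      have h4 : Real.log p ≤ (1/μ) * Real.log (m p) := by linarith
      have h5 : μ * Real.log p ≤ Real.log (m p) := by
        have := mul_le_mul_of_nonneg_left h4 hμpos.le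
        rwa [← mul_assoc, mul_one_div, div_self hμpos.ne', one_mul] at this
      have h6 : μ ≤ Real.log (m p) / Real.log p := (le_div_iff₀ hlogp).2 h5
      exact_mod_cast h6
end

section
/- Let M be a weight sequence and γ > 0 be such that the sequence (m_p/(p+1)^γ)_{p≥0} is almost increasing, i.e., there exists a > 0 with m_p/(p+1)^γ ≤ a·m_q/(q+1)^γ for all q ≥ p. Then γ ≤ ω(M) = liminf_{p→∞} log(m_p)/log(p). -/
/-! Comparing with `p = 0`, almost increasingness gives `m_p ≥ C (p+1)^γ` with `C = m_0 / a > 0`,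
hence `log m_p / log p ≥ γ + log C / log p` for `p ≥ 2`, and the right-hand side tends to `γ`. -/

open Filter Real

def AlmostIncreasing (c : ℕ → ℝ) : Prop :=
  ∃ a > (0 : ℝ), ∀ p q : ℕ, p ≤ q → c p ≤ a * c q

theorem AlmostIncreasing.exists_pos_le {c : ℕ → ℝ} (hc : AlmostIncreasing c) (hc0 : 0 < c 0) :
    ∃ C > (0 : ℝ), ∀ q, C ≤ c q := by
  obtain ⟨a, ha, hle⟩ := hc
  exact ⟨c 0 / a, div_pos hc0 ha, fun q => (div_le_iff₀' ha).2 (hle 0 q q.zero_le)⟩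

theorem add_log_div_log_le_of_mul_rpow_le {x C γ p : ℝ} (hC : 0 < C) (hγ : 0 ≤ γ) (hp : 1 < p)
    (hx : C * (p + 1) ^ γ ≤ x) : γ + log C / log p ≤ log x / log p := by
  have hlogp : 0 < log p := log_pos hp
  have hp1 : 0 < p + 1 := by linarith
  have hlog_lower : log C + γ * log (p + 1) ≤ log x := by
    rw [← log_rpow hp1, ← log_mul hC.ne' (rpow_pos_of_pos hp1 γ).ne']
    exact log_le_log (by positivity) hx
  have hlog_mono : γ * log p ≤ γ * log (p + 1) :=
    mul_le_mul_of_nonneg_left (log_le_log (by linarith) (by linarith)) hγ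
  rw [le_div_iff₀ hlogp, add_mul, div_mul_cancel₀ _ hlogp.ne']
  linarith

theorem tendsto_add_div_log_natCast (γ c : ℝ) :
    Tendsto (fun p : ℕ => γ + c / log p) atTop (nhds γ) := by
  have hlog : Tendsto (fun p : ℕ => log p) atTop atTop :=
    tendsto_log_atTop.comp tendsto_natCast_atTop_atTop
  simpa [div_eq_mul_inv] using tendsto_const_nhds.add (hlog.inv_tendsto_atTop.const_mul c)

theorem le_liminf_log_div_log_of_mul_rpow_le {x : ℕ → ℝ} {C γ : ℝ} (hC : 0 < C) (hγ : 0 ≤ γ)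
    (hx : ∀ᶠ p : ℕ in atTop, C * ((p : ℝ) + 1) ^ γ ≤ x p) :
    (γ : EReal) ≤ liminf (fun p : ℕ => ((log (x p) / log p : ℝ) : EReal)) atTop := by
  have hlim : Tendsto (fun p : ℕ => ((γ + log C / log p : ℝ) : EReal)) atTop (nhds γ) :=
    EReal.tendsto_coe.2 (tendsto_add_div_log_natCast γ (log C))
  rw [← hlim.liminf_eq]
  refine liminf_le_liminf ?_
  filter_upwards [hx, eventually_ge_atTop 2] with p hxp hp
  exact EReal.coe_le_coe_iff.2 <|
    add_log_div_log_le_of_mul_rpow_le hC hγ (by exact_mod_cast hp) hxp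

theorem almostIncreasing_le_omega_general (M : ℕ → ℝ) (γ : ℝ)
    (hpos : ∀ p, 0 < M p)
    (hγ : 0 < γ)
    (hai : ∃ a > (0 : ℝ), ∀ p q : ℕ, p ≤ q →
      (M (p + 1) / M p) / (p + 1 : ℝ) ^ γ ≤ a * ((M (q + 1) / M q) / (q + 1 : ℝ) ^ γ)) :
    (γ : EReal) ≤ liminf (fun p : ℕ =>
        ((Real.log (M (p + 1) / M p) / Real.log p : ℝ) : EReal)) atTop := by
  have hai : AlmostIncreasing fun p => (M (p + 1) / M p) / (p + 1 : ℝ) ^ γ := hai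
  obtain ⟨C, hC, hle⟩ := hai.exists_pos_le (by have := hpos 0; have := hpos 1; positivity)
  refine le_liminf_log_div_log_of_mul_rpow_le hC hγ.le (Eventually.of_forall fun p => ?_)
  exact (le_div_iff₀ (by positivity)).1 (hle p)

/-- If `(m p / (p+1)^γ)` is almost increasing for a weight sequence `M`,
then `γ ≤ ω(M)`. -/
theorem almostIncreasing_le_omega (M : ℕ → ℝ) (γ : ℝ)
    (hpos : ∀ p, 0 < M p) (hM0 : M 0 = 1)
    (hlc : ∀ p : ℕ, 1 ≤ p → (M p) ^ 2 ≤ M (p - 1) * M (p + 1))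
    (htend : Tendsto (fun p => M (p + 1) / M p) atTop atTop)
    (hγ : 0 < γ)
    (hai : ∃ a > (0 : ℝ), ∀ p q : ℕ, p ≤ q →
      (M (p + 1) / M p) / (p + 1 : ℝ) ^ γ ≤ a * ((M (q + 1) / M q) / (q + 1 : ℝ) ^ γ)) :
    (γ : EReal) ≤ liminf (fun p : ℕ =>
        ((Real.log (M (p + 1) / M p) / Real.log p : ℝ) : EReal)) atTop :=
  almostIncreasing_le_omega_general M γ hpos hγ hai
end

section
/- For any weight sequence M, the Thilliez index γ(M) := sup{γ>0 : (m_p/(p+1)^γ)_{p≥0} is almost increasing} satisfies γ(M) ≤ ω(M) := liminf_{p→∞} log(m_p)/log(p). -/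
open Filter Real

/-- The Thilliez index `γ(M)` is at most `ω(M)` for any weight sequence. -/
theorem gamma_le_omega (M : ℕ → ℝ)
    (hpos : ∀ p, 0 < M p) (hM0 : M 0 = 1)
    (hlc : ∀ p : ℕ, 1 ≤ p → (M p) ^ 2 ≤ M (p - 1) * M (p + 1))
    (htend : Tendsto (fun p => M (p + 1) / M p) atTop atTop) :
    sSup (insert (0 : EReal) ((fun γ : ℝ => (γ : EReal)) ''
        {γ : ℝ | 0 < γ ∧ ∃ a > (0 : ℝ), ∀ p q : ℕ, p ≤ q →
          (M (p + 1) / M p) / (p + 1 : ℝ) ^ γ ≤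
            a * ((M (q + 1) / M q) / (q + 1 : ℝ) ^ γ)})) ≤
      liminf (fun p : ℕ =>
        ((Real.log (M (p + 1) / M p) / Real.log p : ℝ) : EReal)) atTop := by
  have hlog : Tendsto (fun p : ℕ => Real.log p) atTop atTop :=
    Real.tendsto_log_atTop.comp tendsto_natCast_atTop_atTop
  apply sSup_le
  rintro x (rfl | ⟨γ, ⟨hγ, a, ha, hae⟩, rfl⟩)
  · refine le_liminf_of_le (by isBoundedDefault) ?_
    filter_upwards [eventually_ge_atTop 2, htend.eventually_ge_atTop 1] with p hp2 hp1
    have hlogp : 0 < Real.log p := Real.log_pos (by exact_mod_cast hp2)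
    have h0 : (0:ℝ) ≤ Real.log (M (p+1)/M p) / Real.log p :=
      div_nonneg (Real.log_nonneg hp1) hlogp.le
    exact_mod_cast h0
  · set c : ℝ := Real.log (M 1 / a) with hc
    have hgt : Tendsto (fun p : ℕ => γ + c / Real.log p) atTop (nhds γ) := by
      have h := (tendsto_const_nhds (x := c) (f := atTop (α := ℕ))).div_atTop hlog
      simpa using (tendsto_const_nhds (x := γ) (f := atTop (α := ℕ))).add h
    have hlim : liminf (fun p : ℕ => ((γ + c / Real.log p : ℝ) : EReal)) atTop
        = (γ : EReal) := (EReal.tendsto_coe.mpr hgt).liminf_eq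
    show (γ : EReal) ≤ _
    rw [← hlim]
    refine liminf_le_liminf ?_ (by isBoundedDefault) (by isBoundedDefault)
    filter_upwards [eventually_ge_atTop 2] with p hp2
    have hppos : (0:ℝ) < p := by exact_mod_cast (by omega : 0 < p)
    have hlogp : 0 < Real.log p := Real.log_pos (by exact_mod_cast hp2)
    have hmp : 0 < M (p+1) / M p := div_pos (hpos _) (hpos _)
    have key := hae 0 p (Nat.zero_le p)
    rw [hM0] at key
    have h1 : M 1 ≤ a * ((M (p+1)/M p) / ((p:ℝ)+1)^γ) := by
      have : ((0:ℕ) + 1 : ℝ) ^ γ = 1 := by norm_num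
      simpa [this] using key
    have hMa : 0 < M 1 / a := div_pos (hpos 1) ha
    have hrp : (0:ℝ) < ((p:ℝ)+1)^γ := Real.rpow_pos_of_pos (by positivity) _
    have h2' : M 1 / a ≤ (M (p+1)/M p) / ((p:ℝ)+1)^γ :=
      (div_le_iff₀ ha).mpr (h1.trans_eq (mul_comm _ _))
    have h2 : (M 1 / a) * ((p:ℝ)+1)^γ ≤ M (p+1)/M p := (le_div_iff₀ hrp).mp h2'
    have h3 : (M 1 / a) * (p:ℝ)^γ ≤ M (p+1)/M p := by
      refine le_trans (mul_le_mul_of_nonneg_left ?_ hMa.le) h2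
      exact Real.rpow_le_rpow hppos.le (by linarith) hγ.le
    have h4 : c + γ * Real.log p ≤ Real.log (M (p+1)/M p) := by
      have := Real.log_le_log (by positivity) h3
      rwa [Real.log_mul hMa.ne' (by positivity), Real.log_rpow hppos] at this
    have h5 : γ + c / Real.log p ≤ Real.log (M (p+1)/M p) / Real.log p := by
      rw [le_div_iff₀ hlogp]
      have : (γ + c / Real.log p) * Real.log p = γ * Real.log p + c := by
        field_simp
      linarith [h4, this.le]
    exact_mod_cast h5
end

section
/- Let M be a weight sequence, r ∈ ℕ with r ≥ 1, and P its r-interpolating sequence, P_{kr+j} = (M_k^{r−j} M_{k+1}^j)^{1/r}. Then ω(M) = r·ω(P), where ω denotes the index ω(L) = liminf_{n→∞} log(L_{n+1}/L_n)/log(n). -/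
open Filter Real

private lemma ereal_liminf_const_mul {c : ℝ} (hc : 0 < c) (u : ℕ → EReal) :
    (c : EReal) * Filter.liminf u Filter.atTop
      = Filter.liminf (fun n => (c : EReal) * u n) Filter.atTop := by
  have heq : (fun x : EReal => (c : EReal) * x) = fun x : EReal => x / ((c⁻¹ : ℝ) : EReal) := by
    funext x
    show (c : EReal) * x = x * ((c⁻¹ : ℝ) : EReal)⁻¹
    rw [EReal.coe_inv, EReal.inv_inv (EReal.coe_ne_bot c) (EReal.coe_ne_top c), mul_comm]
  have hmono : StrictMono (fun x : EReal => (c : EReal) * x) := by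
    rw [heq]
    exact EReal.strictMono_div_right_of_pos (EReal.coe_pos.2 (inv_pos.2 hc)) (EReal.coe_ne_top _)
  have hsurj : Function.Surjective (fun x : EReal => (c : EReal) * x) := by
    intro y
    refine ⟨((c⁻¹ : ℝ) : EReal) * y, ?_⟩
    show (c : EReal) * (((c⁻¹ : ℝ) : EReal) * y) = y
    rw [← mul_assoc, ← EReal.coe_mul, mul_inv_cancel₀ hc.ne', EReal.coe_one, one_mul]
  have := (StrictMono.orderIsoOfSurjective _ hmono hsurj).liminf_apply
    (f := Filter.atTop) (u := u)
  simpa [StrictMono.coe_orderIsoOfSurjective] using this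

/-- `ω(M) = r·ω(P)` for the `r`-interpolating sequence `P` of a weight sequence. -/
theorem omega_interpolating (M P : ℕ → ℝ) (r : ℕ)
    (hr : 1 ≤ r) (hpos : ∀ p, 0 < M p) (hM0 : M 0 = 1)
    (hlc : ∀ p : ℕ, 1 ≤ p → (M p) ^ 2 ≤ M (p - 1) * M (p + 1))
    (htend : Tendsto (fun p => M (p + 1) / M p) atTop atTop)
    (hP : ∀ k : ℕ, ∀ j : ℕ, j ≤ r →
      P (k * r + j) = (M k ^ ((r - j : ℕ) : ℝ) * M (k + 1) ^ (j : ℝ)) ^ ((1 : ℝ) / r)) :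
    liminf (fun p : ℕ =>
        ((Real.log (M (p + 1) / M p) / Real.log p : ℝ) : EReal)) atTop =
      (r : EReal) * liminf (fun n : ℕ =>
        ((Real.log (P (n + 1) / P n) / Real.log n : ℝ) : EReal)) atTop := by
  have hr0 : (r : ℝ) ≠ 0 := by positivity
  set a : ℕ → ℝ := fun p => Real.log (M (p + 1) / M p) with ha
  have haeq : ∀ p, Real.log (M (p + 1) / M p) = a p := fun p => rfl
  -- quotient of P
  have key : ∀ n : ℕ, Real.log (P (n + 1) / P n) = a (n / r) / r := by
    intro n
    set k := n / r with hk
    set j := n % r with hj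
    have hjr : j < r := Nat.mod_lt _ hr
    have hn : k * r + j = n := by rw [hk, hj, mul_comm]; exact Nat.div_add_mod n r
    have h1 : P n = (M k ^ ((r - j : ℕ) : ℝ) * M (k + 1) ^ (j : ℝ)) ^ ((1 : ℝ) / r) := by
      rw [← hn]; exact hP k j hjr.le
    have h2 : P (n + 1)
        = (M k ^ ((r - (j + 1) : ℕ) : ℝ) * M (k + 1) ^ ((j + 1 : ℕ) : ℝ)) ^ ((1 : ℝ) / r) := by
      have hh : k * r + (j + 1) = n + 1 := by omega
      rw [← hh]; exact hP k (j + 1) hjr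
    have hb1 : 0 < M k ^ ((r - j : ℕ) : ℝ) * M (k + 1) ^ (j : ℝ) := by
      have := hpos k; have := hpos (k + 1); positivity
    have hb2 : 0 < M k ^ ((r - (j + 1) : ℕ) : ℝ) * M (k + 1) ^ ((j + 1 : ℕ) : ℝ) := by
      have := hpos k; have := hpos (k + 1); positivity
    have hp1 : (0 : ℝ) < P n := by rw [h1]; exact Real.rpow_pos_of_pos hb1 _
    have hp2 : (0 : ℝ) < P (n + 1) := by rw [h2]; exact Real.rpow_pos_of_pos hb2 _
    have c1 : ((r - j : ℕ) : ℝ) = (r : ℝ) - j := by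
      rw [Nat.cast_sub hjr.le]
    have c2 : ((r - (j + 1) : ℕ) : ℝ) = (r : ℝ) - ((j : ℝ) + 1) := by
      rw [Nat.cast_sub hjr]; push_cast; ring
    rw [Real.log_div hp2.ne' hp1.ne', h1, h2, Real.log_rpow hb2, Real.log_rpow hb1,
      Real.log_mul (Real.rpow_pos_of_pos (hpos k) _).ne' (Real.rpow_pos_of_pos (hpos (k+1)) _).ne',
      Real.log_mul (Real.rpow_pos_of_pos (hpos k) _).ne' (Real.rpow_pos_of_pos (hpos (k+1)) _).ne',
      Real.log_rpow (hpos k), Real.log_rpow (hpos k), Real.log_rpow (hpos (k + 1)),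
      Real.log_rpow (hpos (k + 1)), c1, c2, ha]
    simp only
    rw [Real.log_div (hpos (k + 1)).ne' (hpos k).ne']
    push_cast
    field_simp
    ring
  simp only [haeq, key]
  -- divide by r tends to infinity
  have hdiv : Tendsto (fun n : ℕ => n / r) atTop atTop :=
    Filter.tendsto_atTop_atTop.2 fun b => ⟨b * r, fun n hn => (Nat.le_div_iff_mul_le hr).2 hn⟩
  -- Step A : pull the constant r out of the liminf
  have stepA : (r : EReal) * liminf
      (fun n : ℕ => ((a (n / r) / r / Real.log n : ℝ) : EReal)) atTop
      = liminf (fun n : ℕ => ((a (n / r) / Real.log n : ℝ) : EReal)) atTop := by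
    have hrc : (r : EReal) = (((r : ℝ) : EReal)) := (EReal.coe_coe_eq_natCast r).symm
    rw [hrc, ereal_liminf_const_mul (by positivity : (0:ℝ) < (r:ℝ))]
    congr 1
    funext n
    rw [← EReal.coe_mul]
    congr 1
    rw [div_div, ← mul_div_assoc, mul_div_mul_left _ _ hr0]
  rw [stepA]
  -- eventual facts
  have ha1 : ∀ᶠ p in atTop, 1 ≤ a p := by
    filter_upwards [htend.eventually_ge_atTop (Real.exp 1)] with p hp
    exact (Real.le_log_iff_exp_le (lt_of_lt_of_le (Real.exp_pos 1) hp)).2 hp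
  have hak : ∀ᶠ n in atTop, 1 ≤ a (n / r) := hdiv.eventually ha1
  have hk2 : ∀ᶠ n : ℕ in atTop, 2 ≤ n / r := hdiv.eventually (eventually_ge_atTop 2)
  have hn2 : ∀ᶠ n : ℕ in atTop, 2 ≤ n := eventually_ge_atTop 2
  -- B1 : liminf H ≤ liminf G
  have B1 : liminf (fun n : ℕ => ((a (n / r) / Real.log n : ℝ) : EReal)) atTop
      ≤ liminf (fun p : ℕ => ((a p / Real.log p : ℝ) : EReal)) atTop := by
    have hle : ∀ᶠ n in atTop,
        ((a (n / r) / Real.log n : ℝ) : EReal) ≤ ((a (n/r) / Real.log (n/r : ℕ) : ℝ) : EReal) := by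
      filter_upwards [hak, hk2, hn2] with n h1 h2 h3
      have hklog : (0 : ℝ) < Real.log (n / r : ℕ) := by
        apply Real.log_pos; exact_mod_cast Nat.lt_of_lt_of_le Nat.one_lt_two h2
      have hmono : Real.log (n / r : ℕ) ≤ Real.log n := by
        apply Real.log_le_log (by positivity)
        exact_mod_cast Nat.div_le_self n r
      refine EReal.coe_le_coe_iff.2 ?_
      gcongr
    calc liminf (fun n : ℕ => ((a (n / r) / Real.log n : ℝ) : EReal)) atTop
        ≤ liminf (fun n : ℕ => ((a (n/r) / Real.log (n/r : ℕ) : ℝ) : EReal)) atTop :=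
          liminf_le_liminf hle
      _ = liminf (fun p : ℕ => ((a p / Real.log p : ℝ) : EReal))
            (Filter.map (fun n : ℕ => n / r) atTop) := rfl
      _ = _ := by rw [Filter.map_div_atTop_eq_nat r hr]
  -- B2 : liminf G ≤ liminf H
  have B2 : liminf (fun p : ℕ => ((a p / Real.log p : ℝ) : EReal)) atTop
      ≤ liminf (fun n : ℕ => ((a (n / r) / Real.log n : ℝ) : EReal)) atTop := by
    refine (Filter.le_liminf_iff (by isBoundedDefault) (by isBoundedDefault)).2 fun y hy => ?_
    rcases lt_or_ge y 0 with hy0 | hy0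
    · filter_upwards [hak, hn2] with n h1 h3
      refine hy0.trans_le ?_
      have h0 : (0:ℝ) ≤ a (n / r) / Real.log n := by
        apply div_nonneg (by linarith)
        apply Real.log_nonneg
        exact_mod_cast (show 1 ≤ n by omega)
      exact EReal.coe_nonneg.2 h0
    · have hybot : y ≠ ⊥ := by
        intro h; rw [h] at hy0; exact absurd hy0 (by simp)
      lift y to ℝ using ⟨ne_top_of_lt hy, hybot⟩ with c
      have hc0 : (0:ℝ) ≤ c := by exact_mod_cast hy0
      obtain ⟨z, hyz, hzG⟩ := exists_between hy
      have hzbot : z ≠ ⊥ := ne_bot_of_gt hyz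
      lift z to ℝ using ⟨ne_top_of_lt hzG, hzbot⟩ with d
      have hcd : c < d := by exact_mod_cast hyz
      have hev : ∀ᶠ p in atTop, (d : EReal) < ((a p / Real.log p : ℝ) : EReal) :=
        eventually_lt_of_lt_liminf hzG
      have hevk : ∀ᶠ n in atTop, (d : EReal) < ((a (n/r) / Real.log (n/r : ℕ) : ℝ) : EReal) :=
        hdiv.eventually hev
      have hlog : ∀ᶠ n : ℕ in atTop,
          c * Real.log (2 * r) ≤ (d - c) * Real.log (n / r : ℕ) := by
        have ht : Tendsto (fun n : ℕ => (d - c) * Real.log (n / r : ℕ)) atTop atTop := by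
          apply Tendsto.const_mul_atTop (by linarith)
          exact Real.tendsto_log_atTop.comp (tendsto_natCast_atTop_atTop.comp hdiv)
        exact ht.eventually_ge_atTop _
      filter_upwards [hevk, hak, hk2, hn2, hlog] with n hGk h1 h2 h3 hlg
      have hklog : (0:ℝ) < Real.log (n/r : ℕ) := by
        apply Real.log_pos; exact_mod_cast Nat.lt_of_lt_of_le Nat.one_lt_two h2
      have hnlog : (0:ℝ) < Real.log n := by
        apply Real.log_pos; exact_mod_cast Nat.lt_of_lt_of_le Nat.one_lt_two h3
      have hGk' : d < a (n/r) / Real.log (n/r : ℕ) := by exact_mod_cast hGk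
      have hak' : d * Real.log (n/r : ℕ) < a (n/r) := (lt_div_iff₀ hklog).1 hGk'
      have hbound : Real.log n ≤ Real.log (2 * r) + Real.log (n/r : ℕ) := by
        have e1 : n < r * (n / r) + r := by
          conv_lhs => rw [← Nat.div_add_mod n r]
          exact Nat.add_lt_add_left (Nat.mod_lt _ hr) _
        have e1' : (n : ℝ) < (r : ℝ) * ((n / r : ℕ) : ℝ) + r := by exact_mod_cast e1
        have hk1 : (1:ℝ) ≤ ((n / r : ℕ) : ℝ) := by exact_mod_cast (show 1 ≤ n / r by omega)
        have e2 : (r : ℝ) ≤ (r : ℝ) * ((n / r : ℕ) : ℝ) := by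
          nlinarith [hk1, (show (0:ℝ) < (r:ℝ) by positivity)]
        have hnle : (n : ℝ) ≤ (2 * r : ℝ) * ((n / r : ℕ) : ℝ) := by push_cast; nlinarith
        have hklog0 : ((n / r : ℕ) : ℝ) ≠ 0 := by positivity
        calc Real.log n ≤ Real.log ((2 * r : ℝ) * ((n / r : ℕ) : ℝ)) := by
              apply Real.log_le_log (by positivity) hnle
          _ = Real.log (2 * r) + Real.log (n/r : ℕ) := by
              rw [Real.log_mul (by positivity) hklog0]
      have hfinal : c * Real.log n < a (n/r) :=
        calc c * Real.log n ≤ c * (Real.log (2 * r) + Real.log (n/r : ℕ)) := by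
              exact mul_le_mul_of_nonneg_left hbound hc0
          _ = c * Real.log (2 * r) + c * Real.log (n/r : ℕ) := by ring
          _ ≤ (d - c) * Real.log (n/r : ℕ) + c * Real.log (n/r : ℕ) := by linarith
          _ = d * Real.log (n/r : ℕ) := by ring
          _ < a (n/r) := hak'
      have : c < a (n/r) / Real.log n := (lt_div_iff₀ hnlog).2 hfinal
      exact EReal.coe_lt_coe_iff.2 this
  exact le_antisymm B2 B1
end

section
/- If M is a weight sequence and r ∈ ℕ, r ≥ 1, then the r-interpolating sequence P defined by P_{kr+j} = (M_k^{r−j} M_{k+1}^j)^{1/r} is also a weight sequence: P_0 = 1, P is logarithmically convex, and its quotients tend to infinity. -/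
open Filter Real

/-! The quotient `P (n + 1) / P n` of the interpolating sequence is the `r`-th root of the
quotient `M (k + 1) / M k` with `k = n / r`. Log-convexity of a positive sequence means that
its quotients increase, and both this and divergence of the quotients pass through
`n ↦ n / r` and `x ↦ x ^ (1 / r)`. -/

theorem monotone_succ_div_of_sq_le {M : ℕ → ℝ} (hpos : ∀ p, 0 < M p)
    (hlc : ∀ p : ℕ, 1 ≤ p → M p ^ 2 ≤ M (p - 1) * M (p + 1)) :
    Monotone fun p => M (p + 1) / M p := by
  refine monotone_nat_of_le_succ fun p => ?_
  have h := hlc (p + 1) (by omega)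
  rw [Nat.add_sub_cancel] at h
  rw [div_le_div_iff₀ (hpos p) (hpos (p + 1))]
  nlinarith

theorem sq_le_mul_of_monotone_succ_div {P : ℕ → ℝ} (hpos : ∀ n, 0 < P n)
    (hmono : Monotone fun n => P (n + 1) / P n) {n : ℕ} (hn : 1 ≤ n) :
    P n ^ 2 ≤ P (n - 1) * P (n + 1) := by
  obtain ⟨m, rfl⟩ := Nat.exists_eq_add_of_le' hn
  have h := hmono (Nat.le_succ m)
  simp only [Nat.add_sub_cancel] at h ⊢
  rw [div_le_div_iff₀ (hpos m) (hpos (m + 1))] at h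
  nlinarith

def IsInterpolating (r : ℕ) (M P : ℕ → ℝ) : Prop :=
  ∀ k j : ℕ, j ≤ r →
    P (k * r + j) = (M k ^ ((r - j : ℕ) : ℝ) * M (k + 1) ^ (j : ℝ)) ^ ((1 : ℝ) / r)

section Interpolating

variable {M P : ℕ → ℝ} {r : ℕ}

theorem interpolating_apply (hr : 0 < r) (hP : IsInterpolating r M P) (n : ℕ) :
    P n = (M (n / r) ^ (r - n % r) * M (n / r + 1) ^ (n % r)) ^ ((1 : ℝ) / r) := by
  have h := hP (n / r) (n % r) (Nat.mod_lt n hr).le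
  rwa [Nat.div_add_mod', rpow_natCast, rpow_natCast] at h

theorem interpolating_succ_div (hr : 0 < r) (hpos : ∀ p, 0 < M p) (hP : IsInterpolating r M P)
    (n : ℕ) :
    P (n + 1) / P n = (M (n / r + 1) / M (n / r)) ^ ((1 : ℝ) / r) := by
  have hn := interpolating_apply hr hP n
  set k := n / r
  set j := n % r
  have hj : j < r := Nat.mod_lt n hr
  have hsucc := hP k (j + 1) hj
  rw [← add_assoc, Nat.div_add_mod', rpow_natCast, rpow_natCast] at hsucc
  obtain ⟨m, hm⟩ : ∃ m, r - j = m + 1 := ⟨r - (j + 1), by omega⟩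
  have hm' : r - (j + 1) = m := by omega
  have ha := hpos k
  have hb := hpos (k + 1)
  rw [hsucc, hn, hm, hm', ← div_rpow (by positivity) (by positivity)]
  congr 1
  field_simp
  ring

theorem interpolating_pos (hr : 0 < r) (hpos : ∀ p, 0 < M p) (hP : IsInterpolating r M P)
    (n : ℕ) : 0 < P n := by
  have := hpos (n / r)
  have := hpos (n / r + 1)
  rw [interpolating_apply hr hP n]
  positivity

end Interpolating

/-- The `r`-interpolating sequence of a weight sequence is again a weight
sequence. -/
theorem interpolating_is_weight_sequence (M P : ℕ → ℝ) (r : ℕ)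
    (hr : 1 ≤ r) (hpos : ∀ p, 0 < M p) (hM0 : M 0 = 1)
    (hlc : ∀ p : ℕ, 1 ≤ p → (M p) ^ 2 ≤ M (p - 1) * M (p + 1))
    (htend : Tendsto (fun p => M (p + 1) / M p) atTop atTop)
    (hP : ∀ k : ℕ, ∀ j : ℕ, j ≤ r →
      P (k * r + j) = (M k ^ ((r - j : ℕ) : ℝ) * M (k + 1) ^ (j : ℝ)) ^ ((1 : ℝ) / r)) :
    P 0 = 1 ∧ (∀ n, 0 < P n) ∧
      (∀ n : ℕ, 1 ≤ n → (P n) ^ 2 ≤ P (n - 1) * P (n + 1)) ∧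
      Tendsto (fun n => P (n + 1) / P n) atTop atTop := by
  have hinv : (0 : ℝ) < 1 / r := by positivity
  have hPpos := interpolating_pos hr hpos hP
  refine ⟨?_, hPpos, fun n hn => sq_le_mul_of_monotone_succ_div hPpos ?_ hn, ?_⟩
  · simpa [hM0] using interpolating_apply hr hP 0
  · intro a b hab
    simp only [interpolating_succ_div hr hpos hP]
    exact rpow_le_rpow (div_pos (hpos _) (hpos _)).le
      (monotone_succ_div_of_sq_le hpos hlc (Nat.div_le_div_right hab)) hinv.le
  · have hquot := htend.comp (Nat.tendsto_div_const_atTop (by omega : r ≠ 0))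
    exact ((tendsto_rpow_atTop hinv).comp hquot).congr fun n => (interpolating_succ_div hr hpos hP n).symm
end
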